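/- Let p⁻_1, …, p⁻_n be single-target pdfs (the predicted prior components), and assume that for every data association σ for n targets and every i the single-target evidence e_{σ,i} := ∫_E ℓ̃(σ, i, x) p⁻_i(x) dμ(x) is finite and positive. Define l_σ = (k(σ)!/V^{k(σ)}) ∏_{i=1}^n e_{σ,i}, updated components p̂^σ_i(x) = ℓ̃(σ, i, x) p⁻_i(x)/e_{σ,i} (so p̂^σ_i = p⁻_i when σ(i) = none), and weights ω_σ = p(σ|n) l_σ / ∑_{σ'} p(σ'|n) l_{σ'} (assuming the latter denominator is positive and finite). Then for every X = (x_1,…,x_n) ∈ E^n, the Bayes posterior p(Z|X, n) · [∑_{ν ∈ Perm(Fin n)} ∏_i p⁻_i(x_{ν(i)})] / D, with normalizing constant D = (1/n!) ∫_{E^n} p(Z|X', n) [∑_{ν} ∏_i p⁻_i(x'_{ν(i)})] dμ^{⊗n}(X'), equals ∑_σ ω_σ ∑_{ν ∈ Perm(Fin n)} ∏_{i=1}^n p̂^σ_i(x_{ν(i)}); i.e., the updated multi-target pdf is a mixture over data-association hypotheses of symmetrized products of single-target posteriors. (Proposition 2.) -/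

import Mathlib

open MeasureTheory
open scoped NNReal ENNReal

/-- A data association for `n` targets and `m` measurements: a map
`σ : Fin n → Option (Fin m)` injective on `{i : σ i ≠ none}`. -/
def IsDataAssoc {n m : ℕ} (σ : Fin n → Option (Fin m)) : Prop :=
  ∀ i j : Fin n, σ i ≠ none → σ i = σ j → i = j

instance {n m : ℕ} : DecidablePred (IsDataAssoc (n := n) (m := m)) := fun _ =>
  by unfold IsDataAssoc; infer_instance

abbrev DataAssoc (n m : ℕ) := {σ : Fin n → Option (Fin m) // IsDataAssoc σ}

/-- Clutter count `k(σ) = m − #{i : σ i ≠ none}`. -/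
def kclutter {n m : ℕ} (σ : Fin n → Option (Fin m)) : ℕ :=
  m - (Finset.univ.filter fun i => σ i ≠ none).card

/-- `ℓ̃(σ, i, x) = ℓ(z_j, x)` if `σ i = some j`, and `= 1` if `σ i = none`. -/
def ltil {Z E : Type*} {n m : ℕ} (ℓ : Z → E → ℝ≥0) (z : Fin m → Z)
    (σ : Fin n → Option (Fin m)) (i : Fin n) (x : E) : ℝ≥0 :=
  (σ i).elim 1 fun j => ℓ (z j) x

/-- Prior association probability
`p(σ|n) = p_D^{m−k} (1−p_D)^{n−(m−k)} e^{−λV} (λV)^k / k!`. -/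
noncomputable def pAssoc (pD lam V : ℝ) (n m k : ℕ) : ℝ≥0∞ :=
  ENNReal.ofReal (pD ^ (m - k) * (1 - pD) ^ (n - (m - k)) *
    (Real.exp (-(lam * V)) * ((lam * V) ^ k / (Nat.factorial k))))

/-- Conditional likelihood `p(Z|σ, X, n) = (k(σ)!/V^{k(σ)}) ∏ i, ℓ̃(σ, i, x_i)`. -/
noncomputable def condLik {Z E : Type*} {n m : ℕ} (ℓ : Z → E → ℝ≥0) (z : Fin m → Z)
    (V : ℝ) (σ : DataAssoc n m) (X : Fin n → E) : ℝ≥0∞ :=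
  ENNReal.ofReal ((Nat.factorial (kclutter σ.1)) / V ^ (kclutter σ.1)) *
    ∏ i, (ltil ℓ z σ.1 i (X i) : ℝ≥0∞)

/-- Multi-target likelihood `p(Z|X, n) = ∑_σ p(σ|n) p(Z|σ, X, n)`. -/
noncomputable def mtLik {Z E : Type*} {m : ℕ} (ℓ : Z → E → ℝ≥0) (z : Fin m → Z)
    (pD lam V : ℝ) (n : ℕ) (X : Fin n → E) : ℝ≥0∞ :=
  ∑ σ : DataAssoc n m, pAssoc pD lam V n m (kclutter σ.1) * condLik ℓ z V σ X




section AuxFISST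

lemma isDataAssoc_comp {n m : ℕ} {σ : Fin n → Option (Fin m)} (hσ : IsDataAssoc σ)
    (ν : Equiv.Perm (Fin n)) : IsDataAssoc (σ ∘ ν) := fun i j hne hij =>
  ν.injective (hσ (ν i) (ν j) hne hij)

lemma kclutter_comp {n m : ℕ} (σ : Fin n → Option (Fin m)) (ν : Equiv.Perm (Fin n)) :
    kclutter (σ ∘ ν) = kclutter σ := by
  unfold kclutter
  congr 1
  apply Finset.card_nbij (i := fun i => ν i)
  · intro a ha; simp_all
  · intro a _ b _ h
    exact ν.injective h
  · intro a ha
    simp only [Finset.coe_filter, Set.mem_setOf_eq, Set.mem_image, Function.comp_apply] at *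
    exact ⟨ν.symm a, by simpa using ha.2, by simp⟩

/-- Right action of a permutation on data associations. -/
def assocPerm {n m : ℕ} (ν : Equiv.Perm (Fin n)) : DataAssoc n m ≃ DataAssoc n m where
  toFun σ := ⟨σ.1 ∘ ν, isDataAssoc_comp σ.2 ν⟩
  invFun σ := ⟨σ.1 ∘ ν.symm, isDataAssoc_comp σ.2 ν.symm⟩
  left_inv σ := by ext i : 2; simp
  right_inv σ := by ext i : 2; simp

open MeasureTheory in
lemma lintegral_pi_prod {E : Type*} [MeasurableSpace E] (μ : Measure E) [SigmaFinite μ] :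
    ∀ (n : ℕ) (f : Fin n → E → ℝ≥0∞), (∀ i, Measurable (f i)) →
      ∫⁻ X : Fin n → E, ∏ i, f i (X i) ∂(Measure.pi fun _ : Fin n => μ) =
        ∏ i, ∫⁻ x, f i x ∂μ := by
  intro n
  induction n with
  | zero =>
    intro f hf
    simp [lintegral_const, Measure.pi_univ]
  | succ n ih =>
    intro f hf
    have hmp := MeasureTheory.measurePreserving_piFinSuccAbove
      (fun _ : Fin (n + 1) => μ) 0
    have hf0 : AEMeasurable (f 0) μ := (hf 0).aemeasurable
    have hg : AEMeasurable (fun b : Fin n → E =>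
        ∏ j : Fin n, f ((0 : Fin (n + 1)).succAbove j) (b j))
        (Measure.pi fun _ : Fin n => μ) :=
      (Finset.measurable_prod Finset.univ fun j _ =>
        (hf _).comp (measurable_pi_apply j)).aemeasurable
    calc ∫⁻ X : Fin (n + 1) → E, ∏ i, f i (X i) ∂(Measure.pi fun _ : Fin (n + 1) => μ)
        = ∫⁻ X : Fin (n + 1) → E, f 0 (X 0) *
            ∏ j : Fin n, f ((0 : Fin (n + 1)).succAbove j) (X ((0 : Fin (n + 1)).succAbove j))
            ∂(Measure.pi fun _ : Fin (n + 1) => μ) := by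
          refine lintegral_congr fun X => ?_
          exact Fin.prod_univ_succAbove (fun i => f i (X i)) 0
      _ = ∫⁻ y : E × (Fin n → E), f 0 y.1 *
            ∏ j : Fin n, f ((0 : Fin (n + 1)).succAbove j) (y.2 j)
            ∂(μ.prod (Measure.pi fun _ : Fin n => μ)) := by
          rw [hmp.lintegral_map_equiv]
          refine lintegral_congr fun X => ?_
          simp [MeasurableEquiv.piFinSuccAbove, Fin.tail]
      _ = (∫⁻ x, f 0 x ∂μ) * ∏ j : Fin n, ∫⁻ x, f ((0 : Fin (n + 1)).succAbove j) x ∂μ := by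
          rw [lintegral_prod_mul hf0 hg, ih _ (fun j => hf _)]
      _ = ∏ i, ∫⁻ x, f i x ∂μ :=
          (Fin.prod_univ_succAbove (fun i => ∫⁻ x, f i x ∂μ) 0).symm

end AuxFISST

/-- **Proposition 2 (FISST update after initialization).**  Let `p⁻ 1, …, p⁻ n` be the
predicted prior single-target pdfs, with every single-target evidence
`e σ i = ∫ ℓ̃(σ,i,x) p⁻ᵢ(x) dμ(x)` finite and positive.  With
`l σ = (k(σ)!/V^{k(σ)}) ∏ᵢ e σ i`, updated components
`p̂^σ_i = ℓ̃(σ,i,·) p⁻ᵢ / e σ i` and weights `ω σ = p(σ|n) l σ / ∑_{σ'} p(σ'|n) l σ'`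
(the denominator being positive and finite), the Bayes posterior
`p(Z|X,n) (∑_ν ∏ᵢ p⁻ᵢ(x_{ν i})) / D`, with
`D = (1/n!) ∫_{Eⁿ} p(Z|X',n) (∑_ν ∏ᵢ p⁻ᵢ(x'_{ν i})) dμ^{⊗n}(X')`, equals
`∑_σ ω σ ∑_ν ∏ᵢ p̂^σ_i(x_{ν i})`: a mixture over data-association hypotheses of
symmetrized products of single-target posteriors. -/
theorem fisst_update_after_initialization
    {E : Type*} [MeasurableSpace E] (μ : Measure E) [SigmaFinite μ]
    {Z : Type*} [MeasurableSpace Z] (m : ℕ) (z : Fin m → Z)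
    (ℓ : Z → E → ℝ≥0) (hℓm : Measurable (Function.uncurry ℓ))
    (pD lam V : ℝ) (hpD : pD ∈ Set.Icc (0 : ℝ) 1) (hlam : 0 < lam) (hV : 0 < V)
    (n : ℕ) (ppred : Fin n → E → ℝ≥0)
    (hpm : ∀ i, Measurable (ppred i))
    (hp1 : ∀ i, ∫⁻ x, (ppred i x : ℝ≥0∞) ∂μ = 1)
    (e : DataAssoc n m → Fin n → ℝ≥0∞)
    (he : ∀ σ i, e σ i = ∫⁻ x, (ltil ℓ z σ.1 i x : ℝ≥0∞) * (ppred i x : ℝ≥0∞) ∂μ)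
    (he_fin : ∀ σ i, e σ i ≠ ∞) (he_pos : ∀ σ i, 0 < e σ i)
    (l : DataAssoc n m → ℝ≥0∞)
    (hl : ∀ σ, l σ = ENNReal.ofReal ((Nat.factorial (kclutter σ.1)) / V ^ (kclutter σ.1)) *
      ∏ i, e σ i)
    (phat : DataAssoc n m → Fin n → E → ℝ≥0∞)
    (hphat : ∀ σ i x, phat σ i x =
      (ltil ℓ z σ.1 i x : ℝ≥0∞) * (ppred i x : ℝ≥0∞) / e σ i)
    (hphat_none : ∀ σ i x, σ.1 i = none → phat σ i x = (ppred i x : ℝ≥0∞))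
    (ω : DataAssoc n m → ℝ≥0∞)
    (hω : ∀ σ, ω σ = pAssoc pD lam V n m (kclutter σ.1) * l σ /
      ∑ σ' : DataAssoc n m, pAssoc pD lam V n m (kclutter σ'.1) * l σ')
    (hden_pos : 0 < ∑ σ' : DataAssoc n m, pAssoc pD lam V n m (kclutter σ'.1) * l σ')
    (hden_fin : (∑ σ' : DataAssoc n m, pAssoc pD lam V n m (kclutter σ'.1) * l σ') ≠ ∞)
    (D : ℝ≥0∞)
    (hD : D = (∫⁻ X' : Fin n → E,
        mtLik ℓ z pD lam V n X' *
          (∑ ν : Equiv.Perm (Fin n), ∏ i, (ppred i (X' (ν i)) : ℝ≥0∞))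
        ∂(Measure.pi fun _ : Fin n => μ)) / (Nat.factorial n : ℝ≥0∞)) :
    ∀ X : Fin n → E,
      mtLik ℓ z pD lam V n X *
          (∑ ν : Equiv.Perm (Fin n), ∏ i, (ppred i (X (ν i)) : ℝ≥0∞)) / D =
        ∑ σ : DataAssoc n m,
          ω σ * ∑ ν : Equiv.Perm (Fin n), ∏ i, phat σ i (X (ν i)) := by
  classical
  have hltil_m : ∀ (σ : DataAssoc n m) (i : Fin n),
      Measurable fun x : E => (ltil ℓ z σ.1 i x : ℝ≥0∞) := by
    intro σ i
    unfold ltil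
    cases h : σ.1 i with
    | none => simp only [h, Option.elim]; exact measurable_const
    | some j =>
      simp only [h, Option.elim]
      exact (hℓm.comp (measurable_const.prodMk measurable_id)).coe_nnreal_ennreal
  have hphat_m : ∀ (σ : DataAssoc n m) (i : Fin n), Measurable (phat σ i) := by
    intro σ i
    have hfe : phat σ i = fun x =>
        (ltil ℓ z σ.1 i x : ℝ≥0∞) * (ppred i x : ℝ≥0∞) / e σ i :=
      funext (hphat σ i)
    rw [hfe]
    exact ((hltil_m σ i).mul (hpm i).coe_nnreal_ennreal).div_const _
  have hint_phat : ∀ (σ : DataAssoc n m) (i : Fin n), ∫⁻ x, phat σ i x ∂μ = 1 := by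
    intro σ i
    simp_rw [hphat, div_eq_mul_inv]
    rw [lintegral_mul_const' _ _ (by simp [(he_pos σ i).ne']), ← he]
    exact ENNReal.mul_inv_cancel (he_pos σ i).ne' (he_fin σ i)
  -- the key algebraic identity
  have hstar : ∀ Y : Fin n → E,
      mtLik ℓ z pD lam V n Y *
          (∑ ν : Equiv.Perm (Fin n), ∏ i, (ppred i (Y (ν i)) : ℝ≥0∞)) =
        ∑ σ : DataAssoc n m, (pAssoc pD lam V n m (kclutter σ.1) * l σ) *
          ∑ ν : Equiv.Perm (Fin n), ∏ i, phat σ i (Y (ν i)) := by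
    intro Y
    rw [mtLik, Finset.sum_mul]
    simp_rw [Finset.mul_sum]
    rw [Finset.sum_comm]
    rw [show (∑ σ : DataAssoc n m, ∑ ν : Equiv.Perm (Fin n),
        pAssoc pD lam V n m (kclutter σ.1) * l σ * ∏ i, phat σ i (Y (ν i))) =
        ∑ ν : Equiv.Perm (Fin n), ∑ σ : DataAssoc n m,
        pAssoc pD lam V n m (kclutter σ.1) * l σ * ∏ i, phat σ i (Y (ν i))
      from Finset.sum_comm]
    refine Finset.sum_congr rfl fun ν _ => ?_
    refine Fintype.sum_equiv (assocPerm ν) _ _ fun σ => ?_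
    set σ' : DataAssoc n m := assocPerm ν σ with hσ'
    have hσ'1 : σ'.1 = σ.1 ∘ ν := rfl
    have hk : kclutter σ'.1 = kclutter σ.1 := by rw [hσ'1]; exact kclutter_comp σ.1 ν
    have hL : (∏ i, (ltil ℓ z σ.1 i (Y i) : ℝ≥0∞)) =
        ∏ i, (ltil ℓ z σ.1 (ν i) (Y (ν i)) : ℝ≥0∞) :=
      (Equiv.prod_comp ν (fun j => (ltil ℓ z σ.1 j (Y j) : ℝ≥0∞))).symm
    have hR : (∏ i, e σ' i) * ∏ i, phat σ' i (Y (ν i))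
        = ∏ i, ((ltil ℓ z σ.1 (ν i) (Y (ν i)) : ℝ≥0∞) * (ppred i (Y (ν i)) : ℝ≥0∞)) := by
      rw [← Finset.prod_mul_distrib]
      refine Finset.prod_congr rfl fun i _ => ?_
      rw [hphat]
      exact ENNReal.mul_div_cancel (he_pos σ' i).ne' (he_fin σ' i)
    have hkey : (∏ i, (ltil ℓ z σ.1 i (Y i) : ℝ≥0∞)) *
        (∏ i, (ppred i (Y (ν i)) : ℝ≥0∞))
        = (∏ i, e σ' i) * ∏ i, phat σ' i (Y (ν i)) := by
      rw [hL, hR, Finset.prod_mul_distrib]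
    rw [condLik, hl, hk]
    rw [show ∀ x c a b : ℝ≥0∞, x * (c * a) * b = x * c * (a * b) from
      fun x c a b => by ring, hkey]
    ring
  -- the normalizing constant equals the weight denominator
  have hDS : D = ∑ σ' : DataAssoc n m, pAssoc pD lam V n m (kclutter σ'.1) * l σ' := by
    have hmeas : ∀ (σ : DataAssoc n m),
        Measurable fun X' : Fin n → E =>
          ∑ ν : Equiv.Perm (Fin n), ∏ i, phat σ i (X' (ν i)) := fun σ =>
      Finset.measurable_sum _ fun ν _ =>
        Finset.measurable_prod _ fun i _ => (hphat_m σ i).comp (measurable_pi_apply (ν i))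
    have hint : (∫⁻ X' : Fin n → E, mtLik ℓ z pD lam V n X' *
          (∑ ν : Equiv.Perm (Fin n), ∏ i, (ppred i (X' (ν i)) : ℝ≥0∞))
          ∂(Measure.pi fun _ : Fin n => μ))
        = (∑ σ' : DataAssoc n m, pAssoc pD lam V n m (kclutter σ'.1) * l σ') *
          (Nat.factorial n : ℝ≥0∞) := by
      simp_rw [hstar]
      rw [lintegral_finset_sum _ (fun σ _ => (hmeas σ).const_mul _), Finset.sum_mul]
      refine Finset.sum_congr rfl fun σ _ => ?_
      rw [lintegral_const_mul _ (hmeas σ)]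
      congr 1
      have hmp : ∀ ν : Equiv.Perm (Fin n), Measurable fun X' : Fin n → E =>
          ∏ i, phat σ i (X' (ν i)) := fun ν =>
        Finset.measurable_prod _ fun i _ => (hphat_m σ i).comp (measurable_pi_apply (ν i))
      have hsum := lintegral_finset_sum (μ := Measure.pi fun _ : Fin n => μ)
        (f := fun (ν : Equiv.Perm (Fin n)) (X' : Fin n → E) => ∏ i, phat σ i (X' (ν i)))
        Finset.univ (fun ν _ => hmp ν)
      refine hsum.trans ?_
      have hone : ∀ ν : Equiv.Perm (Fin n),
          (∫⁻ X' : Fin n → E, ∏ i, phat σ i (X' (ν i))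
            ∂(Measure.pi fun _ : Fin n => μ)) = 1 := by
        intro ν
        have hrw : ∀ X' : Fin n → E,
            ∏ i, phat σ i (X' (ν i)) = ∏ i, phat σ (ν.symm i) (X' i) := by
          intro X'
          rw [← Equiv.prod_comp ν (fun i => phat σ (ν.symm i) (X' i))]
          simp
        simp_rw [hrw]
        rw [lintegral_pi_prod μ n _ (fun i => hphat_m σ (ν.symm i))]
        simp [hint_phat]
      simp [hone, Finset.card_univ, Fintype.card_perm, Fintype.card_fin, mul_comm]
    rw [hD, hint, mul_div_assoc, ENNReal.div_self (by positivity)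
      (ENNReal.natCast_ne_top _), mul_one]
  intro X
  rw [hstar X, hDS, div_eq_mul_inv, Finset.sum_mul]
  refine Finset.sum_congr rfl fun σ _ => ?_
  rw [hω σ, div_eq_mul_inv, mul_right_comm]
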